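/- arXiv:2210.06809 — 3 statements merged into one kernel-verified Lean document; each statement's English description precedes it below -/
import Mathlib

section
/- Let Ω ⊂ ℝ^d be a Borel set, let T, T_n : Ω → Ω be Borel measurable maps, and let ρ be a Borel probability measure on Ω. Then T_n converges to T in ρ-measure if and only if the push-forward measures (id × T_n)_# ρ converge weakly to (id × T)_# ρ, i.e. ∫ f(x, T_n(x)) dρ(x) → ∫ f(x, T(x)) dρ(x) for every bounded continuous function f on Ω × Ω. -/
/-!
Forward direction: along a subsequence `T_n → T` almost everywhere, so `f (x, T_n x) → f (x, T x)`
almost everywhere and dominated convergence applies; every subsequence having such a further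
subsequence, the whole sequence of integrals converges.

Backward direction: `min 1 (dist · ·)` is a bounded pseudometric and, by Markov's inequality,
convergence of `∫ min 1 (dist (T_n x) (T x))` to `0` gives convergence in measure. Approximating `T`
first by a simple function and then, in `L¹`, by a continuous `S`, the test function
`(x, y) ↦ min 1 (dist y (S x))` is bounded and continuous, and the triangle inequality through `S`
bounds `∫ min 1 (dist (T_n x) (T x))` by twice `∫ min 1 (dist (T x) (S x))` in the limit.
-/

open MeasureTheory Filter Topology

theorem ContinuousOn.comp_aestronglyMeasurable_of_ae_mem {α β γ : Type*} [MeasurableSpace α]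
    [TopologicalSpace β] [MeasurableSpace β] [OpensMeasurableSpace β] [TopologicalSpace γ]
    [TopologicalSpace.PseudoMetrizableSpace γ] [SecondCountableTopologyEither β γ]
    {μ : Measure α} {f : β → γ} {s : Set β} {g : α → β} (hf : ContinuousOn f s)
    (hs : MeasurableSet s) (hg : Measurable g)
    (hgs : ∀ᵐ x ∂μ, g x ∈ s) : AEStronglyMeasurable (fun x => f (g x)) μ := by
  have hmap : ∀ᵐ y ∂μ.map g, y ∈ s := (ae_map_iff hg.aemeasurable hs).2 hgs
  have := hf.aestronglyMeasurable (μ := μ.map g) hs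
  rw [Measure.restrict_eq_self_of_ae_mem hmap] at this
  exact this.comp_measurable hg

namespace MeasureTheory

theorem TendstoInMeasure.tendsto_integral_comp_prodMk {X Y : Type*} [MeasurableSpace X]
    [TopologicalSpace X] [PseudoMetricSpace Y] {μ : Measure X} [IsFiniteMeasure μ]
    {F : ℕ → X → Y} {G : X → Y} (h : TendstoInMeasure μ F atTop G) {f : X × Y → ℝ}
    {u : Set (X × Y)} {M : ℝ} (hf : ContinuousOn f u) (hfM : ∀ p ∈ u, |f p| ≤ M)
    (hF : ∀ n, ∀ᵐ x ∂μ, (x, F n x) ∈ u) (hG : ∀ᵐ x ∂μ, (x, G x) ∈ u)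
    (hFf : ∀ n, AEStronglyMeasurable (fun x => f (x, F n x)) μ) :
    Tendsto (fun n => ∫ x, f (x, F n x) ∂μ) atTop (𝓝 (∫ x, f (x, G x) ∂μ)) := by
  refine tendsto_of_subseq_tendsto fun ns hns => ?_
  obtain ⟨ms, -, hms⟩ := (h.comp hns).exists_seq_tendsto_ae
  refine ⟨ms, tendsto_integral_of_dominated_convergence (fun _ => M) (fun k => hFf _)
    (integrable_const M) (fun k => (hF _).mono fun x hx => (Real.norm_eq_abs _).trans_le
      (hfM _ hx)) ?_⟩
  filter_upwards [ae_all_iff.2 hF, hG, hms] with x hFx hGx hx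
  exact (hf _ hGx).tendsto.comp (tendsto_nhdsWithin_iff.2
    ⟨tendsto_const_nhds.prodMk_nhds hx, Eventually.of_forall fun k => hFx _⟩)

section MinOneDist

variable {Y : Type*} [PseudoMetricSpace Y] {α : Type*} [MeasurableSpace α] {μ : Measure α}

lemma min_one_dist_triangle (x y z : Y) :
    min 1 (dist x z) ≤ min 1 (dist x y) + min 1 (dist y z) := by
  have := dist_triangle x y z
  have := dist_nonneg (x := x) (y := y)
  have := dist_nonneg (x := y) (y := z)
  simp only [min_def]
  split_ifs <;> linarith

lemma abs_min_one_dist_le_one (x y : Y) : |min 1 (dist x y)| ≤ 1 := by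
  rw [abs_of_nonneg (le_min zero_le_one dist_nonneg)]
  exact min_le_left _ _

lemma integrable_min_one_dist [IsFiniteMeasure μ] {f g : α → Y} (hf : AEStronglyMeasurable f μ)
    (hg : AEStronglyMeasurable g μ) : Integrable (fun x => min 1 (dist (f x) (g x))) μ :=
  Integrable.of_bound ((continuous_const.min continuous_dist).comp_aestronglyMeasurable
    (hf.prodMk hg)) 1
    (ae_of_all _ fun _ => (Real.norm_eq_abs _).trans_le (abs_min_one_dist_le_one _ _))

lemma integral_min_one_dist_triangle [IsFiniteMeasure μ] {f g h : α → Y}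
    (hf : AEStronglyMeasurable f μ) (hg : AEStronglyMeasurable g μ)
    (hh : AEStronglyMeasurable h μ) :
    ∫ x, min 1 (dist (f x) (h x)) ∂μ ≤
      (∫ x, min 1 (dist (f x) (g x)) ∂μ) + ∫ x, min 1 (dist (g x) (h x)) ∂μ := by
  rw [← integral_add (integrable_min_one_dist hf hg) (integrable_min_one_dist hg hh)]
  exact integral_mono (integrable_min_one_dist hf hh)
    ((integrable_min_one_dist hf hg).add (integrable_min_one_dist hg hh))
    fun x => min_one_dist_triangle _ _ _

theorem tendstoInMeasure_of_tendsto_integral_min_one_dist [IsFiniteMeasure μ] {ι : Type*}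
    {l : Filter ι} {f : ι → α → Y} {g : α → Y} (hf : ∀ i, AEStronglyMeasurable (f i) μ)
    (hg : AEStronglyMeasurable g μ)
    (h : Tendsto (fun i => ∫ x, min 1 (dist (f i x) (g x)) ∂μ) l (𝓝 0)) :
    TendstoInMeasure μ f l g := by
  rw [tendstoInMeasure_iff_measureReal_dist]
  intro ε hε
  have hε' : 0 < min 1 ε := lt_min one_pos hε
  have markov : ∀ i, μ.real {x | ε ≤ dist (f i x) (g x)} ≤
      (∫ x, min 1 (dist (f i x) (g x)) ∂μ) / min 1 ε := by
    intro i
    rw [le_div_iff₀' hε']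
    calc min 1 ε * μ.real {x | ε ≤ dist (f i x) (g x)}
        ≤ min 1 ε * μ.real {x | min 1 ε ≤ min 1 (dist (f i x) (g x))} :=
          mul_le_mul_of_nonneg_left (measureReal_mono
            (fun x (hx : ε ≤ _) => min_le_min_left 1 hx) (measure_ne_top μ _)) hε'.le
      _ ≤ ∫ x, min 1 (dist (f i x) (g x)) ∂μ :=
          mul_meas_ge_le_integral_of_nonneg (ae_of_all _ fun x => le_min zero_le_one dist_nonneg)
            (integrable_min_one_dist (hf i) hg) _
  exact squeeze_zero (fun i => measureReal_nonneg) markov (by simpa using h.div_const (min 1 ε))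

end MinOneDist

section Approximation

variable {X E : Type*} [MeasurableSpace X] {μ : Measure X} [IsFiniteMeasure μ]
  [NormedAddCommGroup E]

theorem StronglyMeasurable.exists_simpleFunc_integral_min_one_dist_lt {T : X → E}
    (hT : StronglyMeasurable T) {η : ℝ} (hη : 0 < η) :
    ∃ φ : SimpleFunc X E, ∫ x, min 1 (dist (T x) (φ x)) ∂μ < η := by
  have hlim : Tendsto (fun n => ∫ x, min 1 (dist (T x) (hT.approx n x)) ∂μ) atTop (𝓝 0) := by
    simpa using tendsto_integral_of_dominated_convergence (fun _ => (1 : ℝ))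
      (fun n => (integrable_min_one_dist hT.aestronglyMeasurable
        (hT.approx n).aestronglyMeasurable).aestronglyMeasurable)
      (integrable_const 1)
      (fun n => ae_of_all _ fun x =>
        (Real.norm_eq_abs _).trans_le (abs_min_one_dist_le_one _ _))
      (ae_of_all _ fun x =>
        ((continuous_const.min (continuous_const.dist continuous_id)).tendsto (T x)).comp
          (hT.tendsto_approx x))
  obtain ⟨n, hn⟩ := (hlim.eventually (gt_mem_nhds hη)).exists
  exact ⟨hT.approx n, hn⟩

variable [TopologicalSpace X] [NormalSpace X] [BorelSpace X] [μ.WeaklyRegular] [NormedSpace ℝ E]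

theorem Integrable.exists_continuous_integral_min_one_dist_le {f : X → E} (hf : Integrable f μ)
    {η : ℝ} (hη : 0 < η) :
    ∃ S : X → E, Continuous S ∧ Integrable S μ ∧ ∫ x, min 1 (dist (f x) (S x)) ∂μ ≤ η := by
  obtain ⟨g, hfg, hg⟩ := hf.exists_boundedContinuous_integral_sub_le hη
  refine ⟨g, g.continuous, hg, le_trans (integral_mono
    (integrable_min_one_dist hf.aestronglyMeasurable hg.aestronglyMeasurable)
    (hf.sub hg).norm fun x => ?_) hfg⟩
  rw [Pi.sub_apply, ← dist_eq_norm]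
  exact min_le_right _ _

theorem StronglyMeasurable.exists_continuous_integral_min_one_dist_lt {T : X → E}
    (hT : StronglyMeasurable T) {η : ℝ} (hη : 0 < η) :
    ∃ S : X → E, Continuous S ∧ Integrable S μ ∧ ∫ x, min 1 (dist (T x) (S x)) ∂μ < η := by
  obtain ⟨φ, hφ⟩ := hT.exists_simpleFunc_integral_min_one_dist_lt (μ := μ) (half_pos hη)
  obtain ⟨S, hS, hSint, hφS⟩ :=
    Integrable.exists_continuous_integral_min_one_dist_le
      (φ.integrable_of_isFiniteMeasure (μ := μ)) (half_pos hη)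
  refine ⟨S, hS, hSint, ?_⟩
  calc ∫ x, min 1 (dist (T x) (S x)) ∂μ
      ≤ (∫ x, min 1 (dist (T x) (φ x)) ∂μ) + ∫ x, min 1 (dist (φ x) (S x)) ∂μ :=
        integral_min_one_dist_triangle hT.aestronglyMeasurable φ.aestronglyMeasurable
          hSint.aestronglyMeasurable
    _ < η / 2 + η / 2 := add_lt_add_of_lt_of_le hφ hφS
    _ = η := add_halves η

theorem tendstoInMeasure_of_forall_continuous_tendsto_integral_min_one_dist
    {F : ℕ → X → E} {G : X → E} (hF : ∀ n, AEStronglyMeasurable (F n) μ)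
    (hG : StronglyMeasurable G)
    (h : ∀ S : X → E, Continuous S → Tendsto (fun n => ∫ x, min 1 (dist (F n x) (S x)) ∂μ)
      atTop (𝓝 (∫ x, min 1 (dist (G x) (S x)) ∂μ))) :
    TendstoInMeasure μ F atTop G := by
  refine tendstoInMeasure_of_tendsto_integral_min_one_dist hF hG.aestronglyMeasurable
    (tendsto_order.2 ⟨fun a ha => Eventually.of_forall fun n =>
      ha.trans_le (integral_nonneg fun x => by positivity), fun η hη => ?_⟩)
  obtain ⟨S, hS, hSint, hGS⟩ := hG.exists_continuous_integral_min_one_dist_lt (μ := μ)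
    (half_pos hη)
  filter_upwards [(h S hS).eventually (gt_mem_nhds (by linarith : _ < η - _))] with n hn
  calc ∫ x, min 1 (dist (F n x) (G x)) ∂μ
      ≤ (∫ x, min 1 (dist (F n x) (S x)) ∂μ) + ∫ x, min 1 (dist (S x) (G x)) ∂μ :=
        integral_min_one_dist_triangle (hF n) hSint.aestronglyMeasurable hG.aestronglyMeasurable
    _ = (∫ x, min 1 (dist (F n x) (S x)) ∂μ) + ∫ x, min 1 (dist (G x) (S x)) ∂μ := by
        simp only [dist_comm (S _)]
    _ < η := by linarith

end Approximation

end MeasureTheory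

/-- Convergence in `ρ`-measure of maps `T_n : Ω → Ω` to `T` is equivalent to the weak
convergence of the push-forward measures `(id × T_n)_# ρ` to `(id × T)_# ρ`, i.e. to the
convergence `∫ f(x, T_n(x)) dρ → ∫ f(x, T(x)) dρ` for every bounded continuous `f` on
`Ω × Ω`. -/
theorem tendstoInMeasure_iff_weak_convergence_of_graphs
    {d : ℕ} (Ω : Set (EuclideanSpace ℝ (Fin d))) (hΩ : MeasurableSet Ω)
    (T : EuclideanSpace ℝ (Fin d) → EuclideanSpace ℝ (Fin d))
    (Tn : ℕ → EuclideanSpace ℝ (Fin d) → EuclideanSpace ℝ (Fin d))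
    (hTmeas : Measurable T) (hTnmeas : ∀ n, Measurable (Tn n))
    (hTmaps : Set.MapsTo T Ω Ω) (hTnmaps : ∀ n, Set.MapsTo (Tn n) Ω Ω)
    (ρ : Measure (EuclideanSpace ℝ (Fin d))) [IsProbabilityMeasure ρ]
    (hρΩ : ρ Ωᶜ = 0) :
    TendstoInMeasure ρ Tn atTop T ↔
      ∀ f : EuclideanSpace ℝ (Fin d) × EuclideanSpace ℝ (Fin d) → ℝ,
        ContinuousOn f (Ω ×ˢ Ω) → (∃ M : ℝ, ∀ p ∈ Ω ×ˢ Ω, |f p| ≤ M) →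
        Tendsto (fun n => ∫ x, f (x, Tn n x) ∂ρ) atTop (𝓝 (∫ x, f (x, T x) ∂ρ)) := by
  have hgraph : ∀ G : EuclideanSpace ℝ (Fin d) → EuclideanSpace ℝ (Fin d), Set.MapsTo G Ω Ω →
      ∀ᵐ x ∂ρ, (x, G x) ∈ Ω ×ˢ Ω := fun G hG =>
    Eventually.mono (mem_ae_iff.2 hρΩ) fun x hx => ⟨hx, hG hx⟩
  constructor
  · rintro h f hf ⟨M, hM⟩
    exact h.tendsto_integral_comp_prodMk hf hM (fun n => hgraph _ (hTnmaps n)) (hgraph T hTmaps)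
      fun n => hf.comp_aestronglyMeasurable_of_ae_mem (hΩ.prod hΩ)
        (measurable_id.prodMk (hTnmeas n)) (hgraph _ (hTnmaps n))
  · intro h
    refine tendstoInMeasure_of_forall_continuous_tendsto_integral_min_one_dist
      (fun n => (hTnmeas n).aestronglyMeasurable) hTmeas.stronglyMeasurable
      fun S hS => h (fun p => min 1 (dist p.2 (S p.1)))
        (continuous_const.min (continuous_snd.dist (hS.comp continuous_fst))).continuousOn
        ⟨1, fun p _ => abs_min_one_dist_le_one _ _⟩
end

section
/- Let Ω ⊂ ℝ^d be a bounded Borel set, let 1 < p < ∞, let T_n, T : Ω → Ω be Borel maps, and let ρ_n, ρ be probability densities on Ω such that ρ_n → ρ in L¹(Ω) and the measures (id × T_n)_#(ρ_n dx) converge weakly to (id × T)_#(ρ dx) on Ω × Ω (in duality with bounded continuous functions). Then T_n → T strongly in L^p(Ω, ρ dx), i.e. ∫_Ω |T_n − T|^p ρ dx → 0. -/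
open MeasureTheory Filter Topology
open scoped ENNReal

/-!
Approximate `T` in `L^p(ρ dx)` by a continuous, compactly supported `g`. Testing the weak
convergence of the plans against the bounded continuous function `(x, y) ↦ ‖y - g x‖ ^ p` gives
`∫ ‖Tₙ - g‖ ^ p ρₙ → ∫ ‖T - g‖ ^ p ρ`, which is small. Since `Ω` is bounded, the integrand is
bounded, so the `L¹` convergence `ρₙ → ρ` lets us replace `ρₙ` by `ρ`; finally
`‖Tₙ - T‖ ^ p ≤ 2 ^ (p - 1) (‖Tₙ - g‖ ^ p + ‖T - g‖ ^ p)`.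
-/

theorem tendsto_zero_of_forall_lt_exists_le_tendsto {ι : Type*} {l : Filter ι} {a : ι → ℝ}
    (ha : ∀ᶠ i in l, 0 ≤ a i)
    (h : ∀ ε > 0, ∃ u : ι → ℝ, ∃ L < ε, (∀ᶠ i in l, a i ≤ u i) ∧ Tendsto u l (𝓝 L)) :
    Tendsto a l (𝓝 0) := by
  refine tendsto_order.2 ⟨fun c hc => ha.mono fun i hi => hc.trans_le hi, fun ε hε => ?_⟩
  obtain ⟨u, L, hLε, hau, hu⟩ := h ε hε
  filter_upwards [hau, hu.eventually_lt_const hLε] with i hai hui using hai.trans_lt hui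

theorem norm_sub_rpow_le {E : Type*} [SeminormedAddCommGroup E] {p : ℝ} (hp : 1 ≤ p)
    (a b c : E) : ‖a - b‖ ^ p ≤ 2 ^ (p - 1) * (‖a - c‖ ^ p + ‖b - c‖ ^ p) := by
  have h := NNReal.rpow_add_le_mul_rpow_add_rpow ‖a - c‖₊ ‖b - c‖₊ hp
  have htri : ‖a - b‖ ≤ ‖a - c‖ + ‖b - c‖ := by
    simpa only [norm_sub_rev c b] using norm_sub_le_norm_sub_add_norm_sub a c b
  calc ‖a - b‖ ^ p ≤ (‖a - c‖ + ‖b - c‖) ^ p :=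
        Real.rpow_le_rpow (norm_nonneg _) htri (by linarith)
    _ ≤ 2 ^ (p - 1) * (‖a - c‖ ^ p + ‖b - c‖ ^ p) := by exact_mod_cast h

section WeightedIntegrals

variable {X E : Type*} [MeasurableSpace X] [NormedAddCommGroup E] {μ : Measure X} {s : Set X}

theorem integrableOn_norm_sub_rpow_mul {f g : X → E} {w : X → ℝ} {p A B : ℝ} (hp : 0 ≤ p)
    (hs : MeasurableSet s) (hw : IntegrableOn w s μ)
    (hf : AEStronglyMeasurable f (μ.restrict s)) (hg : AEStronglyMeasurable g (μ.restrict s))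
    (hfA : ∀ x ∈ s, ‖f x‖ ≤ A) (hgB : ∀ x ∈ s, ‖g x‖ ≤ B) :
    IntegrableOn (fun x => ‖f x - g x‖ ^ p * w x) s μ := by
  refine hw.bdd_mul ((hf.sub hg).norm.aemeasurable.pow_const p).aestronglyMeasurable
    (c := (A + B) ^ p) ?_
  filter_upwards [ae_restrict_mem hs] with x hx
  rw [Real.norm_eq_abs, abs_of_nonneg (by positivity)]
  exact Real.rpow_le_rpow (norm_nonneg _)
    ((norm_sub_le _ _).trans (add_le_add (hfA x hx) (hgB x hx))) hp

theorem setIntegral_mul_le_add_mul_setIntegral_abs_sub {h w w' : X → ℝ} {C : ℝ}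
    (hs : MeasurableSet s) (hw : IntegrableOn w s μ) (hw' : IntegrableOn w' s μ)
    (hh : AEStronglyMeasurable h (μ.restrict s)) (hC : ∀ x ∈ s, |h x| ≤ C) :
    ∫ x in s, h x * w x ∂μ ≤ ∫ x in s, h x * w' x ∂μ + C * ∫ x in s, |w' x - w x| ∂μ := by
  have hbd : ∀ᵐ x ∂μ.restrict s, ‖h x‖ ≤ C := by
    filter_upwards [ae_restrict_mem hs] with x hx using hC x hx
  refine sub_le_iff_le_add'.1 ?_
  calc ∫ x in s, h x * w x ∂μ - ∫ x in s, h x * w' x ∂μ = ∫ x in s, h x * (w x - w' x) ∂μ := by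
        rw [← integral_sub (hw.bdd_mul hh hbd) (hw'.bdd_mul hh hbd)]
        simp only [mul_sub]
    _ ≤ ‖∫ x in s, h x * (w x - w' x) ∂μ‖ := Real.le_norm_self _
    _ ≤ ∫ x in s, C * |w' x - w x| ∂μ := by
        refine norm_integral_le_of_norm_le ((hw'.sub hw).abs.const_mul C) ?_
        filter_upwards [hbd] with x hx
        rw [norm_mul, Real.norm_eq_abs (w x - w' x), abs_sub_comm]
        exact mul_le_mul_of_nonneg_right hx (abs_nonneg _)
    _ = C * ∫ x in s, |w' x - w x| ∂μ := integral_const_mul _ _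

theorem setIntegral_norm_sub_rpow_mul_le {f h g : X → E} {w : X → ℝ} {p A B : ℝ} (hp : 1 ≤ p)
    (hs : MeasurableSet s) (hw : IntegrableOn w s μ) (hw0 : ∀ x ∈ s, 0 ≤ w x)
    (hf : AEStronglyMeasurable f (μ.restrict s)) (hh : AEStronglyMeasurable h (μ.restrict s))
    (hg : AEStronglyMeasurable g (μ.restrict s))
    (hfA : ∀ x ∈ s, ‖f x‖ ≤ A) (hhA : ∀ x ∈ s, ‖h x‖ ≤ A) (hgB : ∀ x ∈ s, ‖g x‖ ≤ B) :
    ∫ x in s, ‖f x - h x‖ ^ p * w x ∂μ ≤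
      2 ^ (p - 1) * (∫ x in s, ‖f x - g x‖ ^ p * w x ∂μ + ∫ x in s, ‖h x - g x‖ ^ p * w x ∂μ) := by
  have hp0 : 0 ≤ p := zero_le_one.trans hp
  rw [← integral_add (integrableOn_norm_sub_rpow_mul hp0 hs hw hf hg hfA hgB)
    (integrableOn_norm_sub_rpow_mul hp0 hs hw hh hg hhA hgB), ← integral_const_mul]
  refine setIntegral_mono_on (integrableOn_norm_sub_rpow_mul hp0 hs hw hf hh hfA hhA)
    (((integrableOn_norm_sub_rpow_mul hp0 hs hw hf hg hfA hgB).add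
      (integrableOn_norm_sub_rpow_mul hp0 hs hw hh hg hhA hgB)).const_mul _) hs fun x hx => ?_
  calc ‖f x - h x‖ ^ p * w x ≤ 2 ^ (p - 1) * (‖f x - g x‖ ^ p + ‖h x - g x‖ ^ p) * w x :=
        mul_le_mul_of_nonneg_right (norm_sub_rpow_le hp _ _ _) (hw0 x hx)
    _ = _ := by ring

end WeightedIntegrals

theorem exists_continuous_setIntegral_norm_sub_rpow_mul_le
    {X E : Type*} [MetricSpace X] [ProperSpace X] [MeasurableSpace X] [BorelSpace X]
    [NormedAddCommGroup E] [NormedSpace ℝ E] {μ : Measure X} {s : Set X}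
    (hs : MeasurableSet s) {ρ : X → ℝ} (hρ : IntegrableOn ρ s μ) (hρ0 : ∀ x ∈ s, 0 ≤ ρ x)
    {f : X → E} (hf : AEStronglyMeasurable f (μ.restrict s)) {R : ℝ} (hfR : ∀ x ∈ s, ‖f x‖ ≤ R)
    {p : ℝ} (hp : 0 < p) {δ : ℝ} (hδ : 0 < δ) :
    ∃ g : X → E, Continuous g ∧ HasCompactSupport g ∧
      ∫ x in s, ‖f x - g x‖ ^ p * ρ x ∂μ ≤ δ := by
  -- `ν` is a finite, hence regular, measure on a proper space, so `C_c` is dense in `Lᵖ(ν)`.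
  set ν := (μ.restrict s).withDensity fun x => ((ρ x).toNNReal : ℝ≥0∞)
  have hρ' : AEMeasurable (fun x => (ρ x).toNNReal) (μ.restrict s) :=
    hρ.aemeasurable.real_toNNReal
  have : IsFiniteMeasure ν := isFiniteMeasure_withDensity_ofReal hρ.hasFiniteIntegral
  have hνμ : ν ≪ μ.restrict s := withDensity_absolutelyContinuous _ _
  have hfν : MemLp f (ENNReal.ofReal p) ν :=
    MemLp.of_bound (hf.mono_ac hνμ) R
      (hνμ.ae_le (by filter_upwards [ae_restrict_mem hs] with x hx using hfR x hx))
  obtain ⟨g, g_supp, hg, g_cont, -⟩ := hfν.exists_hasCompactSupport_integral_rpow_sub_le hp hδ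
  refine ⟨g, g_cont, g_supp, ?_⟩
  rwa [integral_withDensity_eq_integral_smul₀ hρ', setIntegral_congr_fun hs fun x hx => by
    rw [NNReal.smul_def, Real.coe_toNNReal _ (hρ0 x hx), smul_eq_mul, mul_comm]] at hg

theorem strong_Lp_convergence_of_transports_of_weak_convergence_of_plans_general
    {d : ℕ} (Ω : Set (EuclideanSpace ℝ (Fin d))) (hΩ : MeasurableSet Ω)
    (hΩbd : Bornology.IsBounded Ω)
    (p : ℝ) (hp : 1 < p)
    (T : EuclideanSpace ℝ (Fin d) → EuclideanSpace ℝ (Fin d))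
    (Tn : ℕ → EuclideanSpace ℝ (Fin d) → EuclideanSpace ℝ (Fin d))
    (hTmeas : Measurable T) (hTnmeas : ∀ n, Measurable (Tn n))
    (hTmaps : Set.MapsTo T Ω Ω) (hTnmaps : ∀ n, Set.MapsTo (Tn n) Ω Ω)
    (ρ : EuclideanSpace ℝ (Fin d) → ℝ) (ρn : ℕ → EuclideanSpace ℝ (Fin d) → ℝ)
    (hρnn : ∀ x, 0 ≤ ρ x)
    (hρint : IntegrableOn ρ Ω) (hρnint : ∀ n, IntegrableOn (ρn n) Ω)
    -- `ρ_n → ρ` in `L¹(Ω)`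
    (hL1 : Tendsto (fun n => ∫ x in Ω, |ρn n x - ρ x|) atTop (𝓝 0))
    -- `(id × T_n)_#(ρ_n dx) ⇀ (id × T)_#(ρ dx)` weakly on `Ω × Ω`
    (hweak : ∀ f : EuclideanSpace ℝ (Fin d) × EuclideanSpace ℝ (Fin d) → ℝ,
        ContinuousOn f (Ω ×ˢ Ω) → (∃ M : ℝ, ∀ q ∈ Ω ×ˢ Ω, |f q| ≤ M) →
        Tendsto (fun n => ∫ x in Ω, f (x, Tn n x) * ρn n x) atTop
          (𝓝 (∫ x in Ω, f (x, T x) * ρ x))) :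
    Tendsto (fun n => ∫ x in Ω, ‖Tn n x - T x‖ ^ p * ρ x) atTop (𝓝 0) := by
  have hp0 : 0 < p := one_pos.trans hp
  obtain ⟨R, hR⟩ := hΩbd.exists_norm_le
  have hTR : ∀ x ∈ Ω, ‖T x‖ ≤ R := fun x hx => hR _ (hTmaps hx)
  have hTnR : ∀ n, ∀ x ∈ Ω, ‖Tn n x‖ ≤ R := fun n x hx => hR _ (hTnmaps n hx)
  refine tendsto_zero_of_forall_lt_exists_le_tendsto
    (Eventually.of_forall fun n => setIntegral_nonneg hΩ fun x _ =>
      mul_nonneg (by positivity) (hρnn x))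
    fun ε hε => ?_
  obtain ⟨g, g_cont, g_supp, hTg⟩ := exists_continuous_setIntegral_norm_sub_rpow_mul_le hΩ hρint
    (fun x _ => hρnn x) hTmeas.aestronglyMeasurable hTR hp0 (δ := ε / 2 ^ p / 2) (by positivity)
  obtain ⟨M, hM⟩ := g_supp.exists_bound_of_continuous g_cont
  set K := (R + M) ^ p
  have hK : ∀ y ∈ Ω, ∀ z, |‖y - g z‖ ^ p| ≤ K := fun y hy z => by
    rw [abs_of_nonneg (by positivity)]
    exact Real.rpow_le_rpow (norm_nonneg _)
      ((norm_sub_le _ _).trans (add_le_add (hR y hy) (hM z))) hp0.le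
  set I := ∫ x in Ω, ‖T x - g x‖ ^ p * ρ x
  refine ⟨fun n => 2 ^ (p - 1) *
      (((∫ x in Ω, ‖Tn n x - g x‖ ^ p * ρn n x) + K * ∫ x in Ω, |ρn n x - ρ x|) + I),
    2 ^ (p - 1) * ((I + K * 0) + I), ?_, Eventually.of_forall fun n => ?_, ?_⟩
  · have h2p : (2 : ℝ) ^ (p - 1) * 2 = 2 ^ p := by rw [Real.rpow_sub_one two_ne_zero]; ring
    calc 2 ^ (p - 1) * ((I + K * 0) + I) = 2 ^ p * I := by rw [← h2p]; ring
      _ ≤ 2 ^ p * (ε / 2 ^ p / 2) := by gcongr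
      _ = ε / 2 := by field_simp
      _ < ε := half_lt_self hε
  · calc ∫ x in Ω, ‖Tn n x - T x‖ ^ p * ρ x
        ≤ 2 ^ (p - 1) * ((∫ x in Ω, ‖Tn n x - g x‖ ^ p * ρ x) + I) :=
          setIntegral_norm_sub_rpow_mul_le hp.le hΩ hρint (fun x _ => hρnn x)
            (hTnmeas n).aestronglyMeasurable hTmeas.aestronglyMeasurable
            g_cont.aestronglyMeasurable (hTnR n) hTR fun x _ => hM x
      _ ≤ 2 ^ (p - 1) *
            (((∫ x in Ω, ‖Tn n x - g x‖ ^ p * ρn n x) + K * ∫ x in Ω, |ρn n x - ρ x|) + I) := by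
          gcongr
          exact setIntegral_mul_le_add_mul_setIntegral_abs_sub hΩ hρint (hρnint n)
            (((hTnmeas n).sub g_cont.measurable).norm.pow_const p).aestronglyMeasurable
            fun x hx => hK _ (hTnmaps n hx) x
  · have hplan := hweak (fun q => ‖q.2 - g q.1‖ ^ p)
      ((continuous_snd.sub (g_cont.comp continuous_fst)).norm.rpow_const
        fun _ => Or.inr hp0.le).continuousOn
      ⟨K, fun q hq => hK _ hq.2 _⟩
    exact (((hplan.add (hL1.const_mul K)).add_const I).const_mul _)

/-- If `Ω` is bounded, `T_n, T : Ω → Ω` are Borel maps, `ρ_n → ρ` in `L¹(Ω)` are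
probability densities on `Ω`, and the push-forwards `(id × T_n)_#(ρ_n dx)` converge
weakly to `(id × T)_#(ρ dx)` on `Ω × Ω`, then `T_n → T` strongly in `L^p(Ω, ρ dx)`
for any `1 < p < ∞`. -/
theorem strong_Lp_convergence_of_transports_of_weak_convergence_of_plans
    {d : ℕ} (Ω : Set (EuclideanSpace ℝ (Fin d))) (hΩ : MeasurableSet Ω)
    (hΩbd : Bornology.IsBounded Ω)
    (p : ℝ) (hp : 1 < p)
    (T : EuclideanSpace ℝ (Fin d) → EuclideanSpace ℝ (Fin d))
    (Tn : ℕ → EuclideanSpace ℝ (Fin d) → EuclideanSpace ℝ (Fin d))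
    (hTmeas : Measurable T) (hTnmeas : ∀ n, Measurable (Tn n))
    (hTmaps : Set.MapsTo T Ω Ω) (hTnmaps : ∀ n, Set.MapsTo (Tn n) Ω Ω)
    (ρ : EuclideanSpace ℝ (Fin d) → ℝ) (ρn : ℕ → EuclideanSpace ℝ (Fin d) → ℝ)
    (hρmeas : Measurable ρ) (hρnmeas : ∀ n, Measurable (ρn n))
    (hρnn : ∀ x, 0 ≤ ρ x) (hρnnn : ∀ n x, 0 ≤ ρn n x)
    (hρone : ∫ x in Ω, ρ x = 1) (hρnone : ∀ n, ∫ x in Ω, ρn n x = 1)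
    (hρint : IntegrableOn ρ Ω) (hρnint : ∀ n, IntegrableOn (ρn n) Ω)
    -- `ρ_n → ρ` in `L¹(Ω)`
    (hL1 : Tendsto (fun n => ∫ x in Ω, |ρn n x - ρ x|) atTop (𝓝 0))
    -- `(id × T_n)_#(ρ_n dx) ⇀ (id × T)_#(ρ dx)` weakly on `Ω × Ω`
    (hweak : ∀ f : EuclideanSpace ℝ (Fin d) × EuclideanSpace ℝ (Fin d) → ℝ,
        ContinuousOn f (Ω ×ˢ Ω) → (∃ M : ℝ, ∀ q ∈ Ω ×ˢ Ω, |f q| ≤ M) →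
        Tendsto (fun n => ∫ x in Ω, f (x, Tn n x) * ρn n x) atTop
          (𝓝 (∫ x in Ω, f (x, T x) * ρ x))) :
    Tendsto (fun n => ∫ x in Ω, ‖Tn n x - T x‖ ^ p * ρ x) atTop (𝓝 0) :=
  strong_Lp_convergence_of_transports_of_weak_convergence_of_plans_general Ω hΩ hΩbd p hp T Tn
    hTmeas hTnmeas hTmaps hTnmaps ρ ρn hρnn hρint hρnint hL1 hweak
end

section
/- Let K be a compact metric space, let μ, ν be Borel probability measures on K, let c_n, c : K × K → ℝ be continuous functions with c_n → c uniformly on K × K, and for each n let γ_n ∈ Π(μ, ν) be an optimal transport plan for the cost c_n, i.e. ∫ c_n dγ_n ≤ ∫ c_n dγ' for every γ' ∈ Π(μ, ν). If γ_n converges weakly (in duality with continuous functions on K × K) to a measure γ, then γ ∈ Π(μ, ν) and γ is an optimal transport plan for the cost c, i.e. ∫ c dγ ≤ ∫ c dγ' for every γ' ∈ Π(μ, ν). -/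
open MeasureTheory Filter Topology
open scoped BoundedContinuousFunction

/-!
Testing the weak convergence `γₙ ⇀ γ` against `1` and against `g ∘ Prod.fst`, `g ∘ Prod.snd`
shows that `γ` is a probability measure with marginals `μ` and `ν`. Since `cₙ → c` uniformly,
`∫ cₙ dσₙ - ∫ c dσₙ → 0` for any sequence of probability measures `σₙ`; hence
`∫ cₙ dγₙ → ∫ c dγ` and `∫ cₙ dγ' → ∫ c dγ'`, and the optimality inequalities
`∫ cₙ dγₙ ≤ ∫ cₙ dγ'` pass to the limit.
-/

section

variable {ι X : Type*} {l : Filter ι} [MeasurableSpace X]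

theorem isProbabilityMeasure_of_tendsto_integral_one [l.NeBot] {γs : ι → Measure X}
    (hγs : ∀ i, IsProbabilityMeasure (γs i)) {γ : Measure X}
    (h : Tendsto (fun i => ∫ _, (1 : ℝ) ∂γs i) l (𝓝 (∫ _, (1 : ℝ) ∂γ))) :
    IsProbabilityMeasure γ := by
  simp only [integral_const, smul_eq_mul, mul_one, probReal_univ] at h
  exact isProbabilityMeasure_iff_real.mpr (tendsto_nhds_unique tendsto_const_nhds h).symm

theorem tendsto_integral_sub_integral_of_tendstoUniformly {F : ι → X → ℝ} {f : X → ℝ}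
    (hF : TendstoUniformly F f l) {σ : ι → Measure X} (hσ : ∀ i, IsProbabilityMeasure (σ i))
    (hFint : ∀ i, Integrable (F i) (σ i)) (hfint : ∀ i, Integrable f (σ i)) :
    Tendsto (fun i => ∫ x, F i x ∂σ i - ∫ x, f x ∂σ i) l (𝓝 0) := by
  rw [Metric.tendsto_nhds]
  intro ε hε
  filter_upwards [Metric.tendstoUniformly_iff.mp hF (ε / 2) (half_pos hε)] with i hi
  have hbound : ‖∫ x, (F i x - f x) ∂σ i‖ ≤ ε / 2 := by
    simpa using norm_integral_le_of_norm_le_const (μ := σ i) (f := fun x => F i x - f x)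
      (.of_forall fun x => by rw [← dist_eq_norm, dist_comm]; exact (hi x).le)
  rw [dist_zero_right, ← integral_sub (hFint i) (hfint i)]
  linarith

theorem tendsto_integral_of_tendstoUniformly {F : ι → X → ℝ} {f : X → ℝ}
    (hF : TendstoUniformly F f l) {σ : ι → Measure X} (hσ : ∀ i, IsProbabilityMeasure (σ i))
    (hFint : ∀ i, Integrable (F i) (σ i)) (hfint : ∀ i, Integrable f (σ i)) {L : ℝ}
    (hf : Tendsto (fun i => ∫ x, f x ∂σ i) l (𝓝 L)) :
    Tendsto (fun i => ∫ x, F i x ∂σ i) l (𝓝 L) := by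
  simpa using (tendsto_integral_sub_integral_of_tendstoUniformly hF hσ hFint hfint).add hf

theorem map_eq_of_tendsto_integral_comp [l.NeBot] {Y : Type*} [TopologicalSpace Y]
    [TopologicalSpace.PseudoMetrizableSpace Y] [MeasurableSpace Y] [BorelSpace Y] {p : X → Y}
    (hp : Measurable p)
    {γs : ι → Measure X} {γ : Measure X} [IsFiniteMeasure γ] {μ : Measure Y} [IsFiniteMeasure μ]
    (hmap : ∀ i, (γs i).map p = μ)
    (h : ∀ g : Y →ᵇ ℝ, Tendsto (fun i => ∫ x, g (p x) ∂γs i) l (𝓝 (∫ x, g (p x) ∂γ))) :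
    γ.map p = μ := by
  refine ext_of_forall_integral_eq_of_IsFiniteMeasure fun g => ?_
  have hcomp : ∀ σ : Measure X, ∫ y, g y ∂σ.map p = ∫ x, g (p x) ∂σ := fun σ =>
    integral_map hp.aemeasurable g.continuous.aestronglyMeasurable
  have hconst : Tendsto (fun i => ∫ x, g (p x) ∂γs i) l (𝓝 (∫ y, g y ∂μ)) := by
    simp only [← hcomp, hmap, tendsto_const_nhds]
  rw [hcomp]
  exact tendsto_nhds_unique (h g) hconst

end

/-- Stability of optimal transport plans: if `c_n → c` uniformly on a compact metric
space `K × K`, `γ_n ∈ Π(μ, ν)` is optimal for `c_n`, and `γ_n ⇀ γ` weakly, then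
`γ ∈ Π(μ, ν)` and `γ` is optimal for `c`. -/
theorem optimal_plans_stable_under_uniform_convergence
    {K : Type*} [MetricSpace K] [CompactSpace K]
    [MeasurableSpace K] [BorelSpace K]
    (μ ν : Measure K) [IsProbabilityMeasure μ] [IsProbabilityMeasure ν]
    (c : K × K → ℝ) (cn : ℕ → K × K → ℝ)
    (hc : Continuous c) (hcn : ∀ n, Continuous (cn n))
    (hunif : TendstoUniformly cn c atTop)
    (γn : ℕ → Measure (K × K)) (hγnprob : ∀ n, IsProbabilityMeasure (γn n))
    (hγnfst : ∀ n, (γn n).map Prod.fst = μ) (hγnsnd : ∀ n, (γn n).map Prod.snd = ν)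
    (hopt : ∀ n, ∀ γ' : Measure (K × K), IsProbabilityMeasure γ' →
        γ'.map Prod.fst = μ → γ'.map Prod.snd = ν →
        ∫ q, cn n q ∂(γn n) ≤ ∫ q, cn n q ∂γ')
    (γ : Measure (K × K))
    (hweak : ∀ f : C(K × K, ℝ),
        Tendsto (fun n => ∫ q, f q ∂(γn n)) atTop (𝓝 (∫ q, f q ∂γ))) :
    γ.map Prod.fst = μ ∧ γ.map Prod.snd = ν ∧
      ∀ γ' : Measure (K × K), IsProbabilityMeasure γ' →
        γ'.map Prod.fst = μ → γ'.map Prod.snd = ν →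
        ∫ q, c q ∂γ ≤ ∫ q, c q ∂γ' := by
  have hγprob : IsProbabilityMeasure γ :=
    isProbabilityMeasure_of_tendsto_integral_one hγnprob (hweak 1)
  have hweak_comp (p : C(K × K, K)) (g : K →ᵇ ℝ) :
      Tendsto (fun n => ∫ q, g (p q) ∂γn n) atTop (𝓝 (∫ q, g (p q) ∂γ)) :=
    hweak (g.toContinuousMap.comp p)
  have hint {f : K × K → ℝ} (hf : Continuous f) (σ : Measure (K × K)) [IsFiniteMeasure σ] :
      Integrable f σ :=
    hf.integrable_of_hasCompactSupport (.of_compactSpace f)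
  refine ⟨map_eq_of_tendsto_integral_comp measurable_fst hγnfst (hweak_comp .fst),
    map_eq_of_tendsto_integral_comp measurable_snd hγnsnd (hweak_comp .snd), ?_⟩
  intro γ' hγ' hγ'fst hγ'snd
  have hlim : Tendsto (fun n => ∫ q, cn n q ∂γn n) atTop (𝓝 (∫ q, c q ∂γ)) :=
    tendsto_integral_of_tendstoUniformly hunif hγnprob (fun n => hint (hcn n) _)
      (fun _ => hint hc _) (hweak ⟨c, hc⟩)
  have hlim' : Tendsto (fun n => ∫ q, cn n q ∂γ') atTop (𝓝 (∫ q, c q ∂γ')) :=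
    tendsto_integral_of_tendstoUniformly hunif (fun _ => hγ') (fun n => hint (hcn n) _)
      (fun _ => hint hc _) tendsto_const_nhds
  exact le_of_tendsto_of_tendsto' hlim hlim' fun n => hopt n γ' hγ' hγ'fst hγ'snd
end
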